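/- For n ∈ ℕ, set Q_n(x) = Σ_k C(n,2k) x^k and P_n(x) = Σ_k C(n,2k+1) x^k (the even and odd binomial-coefficient sections of (1+x)^n). Then the polynomial sequence (P_n, P_{n+1}, Q_n, Q_{n+1}) is pairwise interlacing: P_n ≺ P_{n+1} ≺ Q_n ≺ Q_{n+1}, and in particular P_n ≺ Q_n and P_{n+1} ≺ Q_{n+1}. -/

import Mathlib

open scoped BigOperators

/-- The coefficient of `x^n` in a power series, for an integer `n`
(zero when `n < 0`). -/
noncomputable def intCoeff (A : PowerSeries ℝ) (n : ℤ) : ℝ :=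
  if 0 ≤ n then PowerSeries.coeff (R := ℝ) n.toNat A else 0

/-- A `ℤ × ℤ` matrix is totally positive (TP) if every finite square
submatrix (rows and columns chosen in increasing order) has nonnegative
determinant. -/
def TP (M : ℤ → ℤ → ℝ) : Prop :=
  ∀ (n : ℕ) (r c : Fin n → ℤ), StrictMono r → StrictMono c →
    0 ≤ (Matrix.of fun a b => M (r a) (c b)).det

/-- The interlacing matrix `Lace(A)` of a `p × q` matrix of formal power
series: the `(u,v)`-entry, for `u = p·u' + i` (`0 ≤ i < p`) and
`v = q·v' + j` (`0 ≤ j < q`), is the coefficient of `x^(v'-u')` in `A i j`. -/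
noncomputable def lace {p q : ℕ} [NeZero p] [NeZero q]
    (A : Fin p → Fin q → PowerSeries ℝ) : ℤ → ℤ → ℝ := fun u v =>
  intCoeff
    (A ⟨(u % (p : ℤ)).toNat, by
          have hp : (0 : ℤ) < (p : ℤ) := by
            exact_mod_cast Nat.pos_of_ne_zero (NeZero.ne p)
          have h1 := Int.emod_nonneg u hp.ne'
          have h2 := Int.emod_lt_of_pos u hp
          omega⟩
       ⟨(v % (q : ℤ)).toNat, by
          have hq : (0 : ℤ) < (q : ℤ) := by
            exact_mod_cast Nat.pos_of_ne_zero (NeZero.ne q)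
          have h1 := Int.emod_nonneg v hq.ne'
          have h2 := Int.emod_lt_of_pos v hq
          omega⟩)
    (v / (q : ℤ) - u / (p : ℤ))

/-- A matrix of formal power series is fully interlacing when its
interlacing matrix is totally positive. -/
def FullyInterlacing {p q : ℕ} [NeZero p] [NeZero q]
    (A : Fin p → Fin q → PowerSeries ℝ) : Prop :=
  TP (lace A)

/-- A sequence of power series viewed as a `p × 1` column matrix. -/
noncomputable def colMat {p : ℕ} (A : Fin p → PowerSeries ℝ) :
    Fin p → Fin 1 → PowerSeries ℝ := fun i _ => A i

/-- `A(x)` interlaces `B(x)`: the `2 × 1` column `(A, B)ᵀ` is fully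
interlacing. -/
def SeriesInterlaces (A B : PowerSeries ℝ) : Prop :=
  FullyInterlacing (colMat ![A, B])

/-- A power series is AESW (a Pólya frequency sequence) when its Toeplitz
matrix `(a_{v-u})` is totally positive. -/
def IsAESW (A : PowerSeries ℝ) : Prop :=
  TP fun u v => intCoeff A (v - u)

/-- The `k`-th Veronese `r`-section `S_k^{(r)} A(x) = ∑_{n ≥ 0} a_{k+rn} xⁿ`. -/
noncomputable def veronese (r k : ℕ) (A : PowerSeries ℝ) : PowerSeries ℝ :=
  PowerSeries.mk fun n => PowerSeries.coeff (R := ℝ) (k + r * n) A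

/-- `Qₙ(x) = ∑ₖ C(n,2k) xᵏ`, the even 2-section of `(1+x)ⁿ`. -/
noncomputable def Qbin (n : ℕ) : PowerSeries ℝ :=
  PowerSeries.mk fun k => (n.choose (2 * k) : ℝ)

/-- `Pₙ(x) = ∑ₖ C(n,2k+1) xᵏ`, the odd 2-section of `(1+x)ⁿ`. -/
noncomputable def Pbin (n : ℕ) : PowerSeries ℝ :=
  PowerSeries.mk fun k => (n.choose (2 * k + 1) : ℝ)

/-!
Multiplying a power series by `1 + x` adds to each row of its Toeplitz matrix the next row, and
adding to each row a nonnegative multiple of the next one preserves total positivity. Hence the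
Toeplitz matrix of `(1 + x)ⁿ` is totally positive. For each of the six pairs, the interlacing
matrix is obtained from it by keeping the columns `2v + s` and then adding to every row a
nonnegative multiple of the next one, so it is totally positive as well.
-/

open PowerSeries

theorem TP.comp {M : ℤ → ℤ → ℝ} (hM : TP M) {f g : ℤ → ℤ} (hf : StrictMono f)
    (hg : StrictMono g) : TP fun u v => M (f u) (g v) :=
  fun n r c hr hc => hM n (f ∘ r) (g ∘ c) (hf.comp hr) (hg.comp hc)

theorem TP.det_nonneg_of_monotone {M : ℤ → ℤ → ℝ} (hM : TP M) {n : ℕ} {r c : Fin n → ℤ}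
    (hr : Monotone r) (hc : StrictMono c) :
    0 ≤ (Matrix.of fun a b => M (r a) (c b)).det := by
  by_cases hinj : Function.Injective r
  · exact hM n r c (hr.strictMono_of_injective hinj) hc
  · obtain ⟨i, j, hij, hne⟩ := Function.not_injective_iff.mp hinj
    rw [Matrix.det_zero_of_row_eq hne (by ext; simp [hij])]

theorem TP.add_shift_row {N : ℤ → ℤ → ℝ} (hN : TP N) {α β : ℤ → ℝ}
    (hα : ∀ u, 0 ≤ α u) (hβ : ∀ u, 0 ≤ β u) :
    TP fun u v => α u * N u v + β u * N (u + 1) v := by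
  classical
  intro n r c hr hc
  -- Expanding every row, each term is a nonnegatively scaled minor of `N` with weakly
  -- increasing row indices.
  change 0 ≤ Matrix.detRowAlternating
    ((fun a b => α (r a) * N (r a) (c b)) + fun a b => β (r a) * N (r a + 1) (c b))
  rw [AlternatingMap.map_add_univ]
  refine Finset.sum_nonneg fun s _ => ?_
  have hrow : s.piecewise (fun a b => α (r a) * N (r a) (c b))
      (fun a b => β (r a) * N (r a + 1) (c b)) = Matrix.of fun a b =>
        (if a ∈ s then α (r a) else β (r a)) *
          Matrix.of (fun a b => N (r a + if a ∈ s then 0 else 1) (c b)) a b := by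
    ext a b
    by_cases ha : a ∈ s <;> simp [ha]
  change 0 ≤ Matrix.det _
  rw [hrow, Matrix.det_mul_column]
  refine mul_nonneg (Finset.prod_nonneg fun a _ => ?_) (hN.det_nonneg_of_monotone ?_ hc)
  · split_ifs
    exacts [hα _, hβ _]
  · intro a b hab
    rcases hab.eq_or_lt with rfl | hlt
    · rfl
    · have := hr hlt
      dsimp only
      split_ifs <;> omega

theorem TP_ite_eq : TP fun u v => if u = v then 1 else 0 := by
  intro n r c hr hc
  by_cases hrc : Set.range r ⊆ Set.range c
  · by_cases hcr : Set.range c ⊆ Set.range r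
    · obtain rfl := (hr.range_inj hc).mp (hrc.antisymm hcr)
      have : (Matrix.of fun a b => if r a = r b then (1 : ℝ) else 0) = 1 := by
        ext a b
        simp [Matrix.one_apply, hr.injective.eq_iff]
      simp [this]
    · obtain ⟨_, ⟨b, rfl⟩, hb⟩ := Set.not_subset.mp hcr
      rw [Matrix.det_eq_zero_of_column_eq_zero b fun a => by
        simp only [Matrix.of_apply, ite_eq_right_iff]
        exact fun h => absurd ⟨a, h⟩ hb]
  · obtain ⟨_, ⟨a, rfl⟩, ha⟩ := Set.not_subset.mp hrc
    rw [Matrix.det_eq_zero_of_row_eq_zero a fun b => by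
      simp only [Matrix.of_apply, ite_eq_right_iff]
      exact fun h => absurd ⟨b, h.symm⟩ ha]

theorem intCoeff_of_neg {A : PowerSeries ℝ} {k : ℤ} (hk : k < 0) : intCoeff A k = 0 :=
  if_neg (by omega)

theorem intCoeff_natCast (A : PowerSeries ℝ) (k : ℕ) : intCoeff A k = coeff k A := by
  simp [intCoeff]

theorem intCoeff_one (k : ℤ) : intCoeff 1 k = if k = 0 then 1 else 0 := by
  rcases lt_or_ge k 0 with hk | hk
  · rw [intCoeff_of_neg hk, if_neg hk.ne]
  · lift k to ℕ using hk
    simp [intCoeff_natCast, coeff_one]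

theorem intCoeff_X_mul (A : PowerSeries ℝ) (k : ℤ) : intCoeff (X * A) k = intCoeff A (k - 1) := by
  rcases lt_trichotomy k 0 with hk | rfl | hk
  · rw [intCoeff_of_neg hk, intCoeff_of_neg (by omega)]
  · simp [intCoeff]
  · obtain ⟨k, rfl⟩ : ∃ m : ℕ, k = m + 1 := ⟨(k - 1).toNat, by omega⟩
    rw [add_sub_cancel_right, ← Nat.cast_succ, intCoeff_natCast, intCoeff_natCast, coeff_succ_X_mul]

theorem intCoeff_one_add_X_mul (A : PowerSeries ℝ) (k : ℤ) :
    intCoeff ((1 + X) * A) k = intCoeff A k + intCoeff A (k - 1) := by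
  rw [add_mul, one_mul, ← intCoeff_X_mul]
  simp only [intCoeff, map_add]
  split_ifs <;> simp

theorem intCoeff_veronese {r k : ℕ} (hk : k < r) (A : PowerSeries ℝ) (m : ℤ) :
    intCoeff (veronese r k A) m = intCoeff A (k + r * m) := by
  rcases lt_or_ge m 0 with hm | hm
  · rw [intCoeff_of_neg hm, intCoeff_of_neg (by nlinarith)]
  · lift m to ℕ using hm
    rw [intCoeff_natCast, ← Nat.cast_mul, ← Nat.cast_add, intCoeff_natCast, veronese, coeff_mk]

theorem coeff_one_add_X_pow (n k : ℕ) : coeff k ((1 + X : PowerSeries ℝ) ^ n) = n.choose k := by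
  rw [← Polynomial.coe_X, ← Polynomial.coe_one, ← Polynomial.coe_add, ← Polynomial.coe_pow,
    Polynomial.coeff_coe, Polynomial.coeff_one_add_X_pow]

theorem Pbin_eq_veronese (n : ℕ) : Pbin n = veronese 2 1 ((1 + X) ^ n) := by
  ext k
  simp [Pbin, veronese, coeff_one_add_X_pow, add_comm]

theorem Qbin_eq_veronese (n : ℕ) : Qbin n = veronese 2 0 ((1 + X) ^ n) := by
  ext k
  simp [Qbin, veronese, coeff_one_add_X_pow]

theorem isAESW_one : IsAESW 1 := by
  rw [IsAESW]
  convert TP_ite_eq using 3 with u v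
  simp [intCoeff_one, sub_eq_zero, eq_comm]

theorem IsAESW.one_add_X_mul {A : PowerSeries ℝ} (hA : IsAESW A) : IsAESW ((1 + X) * A) := by
  rw [IsAESW]
  convert hA.add_shift_row (α := 1) (β := 1) (fun _ => zero_le_one) (fun _ => zero_le_one)
    using 3 with u v
  simp [intCoeff_one_add_X_mul, sub_add_eq_sub_sub]

theorem isAESW_one_add_X_pow (n : ℕ) : IsAESW ((1 + X) ^ n) := by
  induction n with
  | zero => simpa using isAESW_one
  | succ n ih => simpa [pow_succ'] using ih.one_add_X_mul

theorem lace_colMat_two_mul (A B : PowerSeries ℝ) (w v : ℤ) :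
    lace (colMat ![A, B]) (2 * w) v = intCoeff A (v - w) := by
  simp [lace, colMat]

theorem lace_colMat_two_mul_add_one (A B : PowerSeries ℝ) (w v : ℤ) :
    lace (colMat ![A, B]) (2 * w + 1) v = intCoeff B (v - w) := by
  simp [lace, colMat]
  congr 1
  omega

theorem seriesInterlaces_of_TP {A B : PowerSeries ℝ} {M : ℤ → ℤ → ℝ} (hM : TP M)
    (hA : ∀ w v, M (2 * w) v = intCoeff A (v - w))
    (hB : ∀ w v, M (2 * w + 1) v = intCoeff B (v - w)) : SeriesInterlaces A B := by
  rw [SeriesInterlaces, FullyInterlacing]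
  convert hM
  ext u v
  obtain ⟨w, rfl | rfl⟩ := Int.even_or_odd' u
  · rw [lace_colMat_two_mul, hA]
  · rw [lace_colMat_two_mul_add_one, hB]

theorem strictMono_two_mul_add (s : ℤ) : StrictMono fun v : ℤ => 2 * v + s :=
  fun a b h => show 2 * a + s < 2 * b + s by omega

theorem IsAESW.seriesInterlaces_of_intCoeff {A B C : PowerSeries ℝ} (hA : IsAESW A) (s : ℤ)
    (p₀ q₀ p₁ q₁ : ℝ)
    (hB : ∀ k, intCoeff B k = p₀ * intCoeff A (2 * k + s) + q₀ * intCoeff A (2 * k + s - 1))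
    (hC : ∀ k, intCoeff C k = p₁ * intCoeff A (2 * k + s - 1) + q₁ * intCoeff A (2 * k + s - 2))
    (hp₀ : 0 ≤ p₀ := by norm_num) (hq₀ : 0 ≤ q₀ := by norm_num)
    (hp₁ : 0 ≤ p₁ := by norm_num) (hq₁ : 0 ≤ q₁ := by norm_num) :
    SeriesInterlaces B C := by
  have hM := (hA.comp strictMono_id (strictMono_two_mul_add s)).add_shift_row
    (α := fun u => if Even u then p₀ else p₁) (β := fun u => if Even u then q₀ else q₁)
    (fun u => by split_ifs <;> assumption) (fun u => by split_ifs <;> assumption)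
  refine seriesInterlaces_of_TP hM (fun w v => ?_) (fun w v => ?_)
  · simp only [if_pos (even_two_mul w), hB, id]
    ring_nf
  · simp only [if_neg (Int.not_even_two_mul_add_one w), hC, id]
    ring_nf

section

variable {A : PowerSeries ℝ}

theorem IsAESW.seriesInterlaces_veronese_one_zero (hA : IsAESW A) :
    SeriesInterlaces (veronese 2 1 A) (veronese 2 0 A) :=
  hA.seriesInterlaces_of_intCoeff 1 1 0 1 0
    (fun k => by simp [intCoeff_veronese]; ring_nf)
    (fun k => by simp [intCoeff_veronese])

theorem IsAESW.seriesInterlaces_veronese_one_one_add_X_mul (hA : IsAESW A) :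
    SeriesInterlaces (veronese 2 1 A) (veronese 2 1 ((1 + X) * A)) :=
  hA.seriesInterlaces_of_intCoeff 2 0 1 1 1
    (fun k => by simp [intCoeff_veronese]; ring_nf)
    (fun k => by simp [intCoeff_veronese, intCoeff_one_add_X_mul]; ring_nf)

theorem IsAESW.seriesInterlaces_one_add_X_mul_veronese_one_zero (hA : IsAESW A) :
    SeriesInterlaces (veronese 2 1 ((1 + X) * A)) (veronese 2 0 A) :=
  hA.seriesInterlaces_of_intCoeff 1 1 1 1 0
    (fun k => by simp [intCoeff_veronese, intCoeff_one_add_X_mul]; ring_nf)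
    (fun k => by simp [intCoeff_veronese])

theorem IsAESW.seriesInterlaces_veronese_zero_one_add_X_mul (hA : IsAESW A) :
    SeriesInterlaces (veronese 2 0 A) (veronese 2 0 ((1 + X) * A)) :=
  hA.seriesInterlaces_of_intCoeff 1 0 1 1 1
    (fun k => by simp [intCoeff_veronese])
    (fun k => by simp [intCoeff_veronese, intCoeff_one_add_X_mul]; ring_nf)

theorem IsAESW.seriesInterlaces_veronese_one_zero_one_add_X_mul (hA : IsAESW A) :
    SeriesInterlaces (veronese 2 1 A) (veronese 2 0 ((1 + X) * A)) :=
  hA.seriesInterlaces_of_intCoeff 1 1 0 1 1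
    (fun k => by simp [intCoeff_veronese]; ring_nf)
    (fun k => by simp [intCoeff_veronese, intCoeff_one_add_X_mul]; ring_nf)

end

/-- The sequence `(Pₙ, Pₙ₊₁, Qₙ, Qₙ₊₁)` is pairwise interlacing:
`Pₙ ≺ Pₙ₊₁ ≺ Qₙ ≺ Qₙ₊₁`, and in particular `Pₙ ≺ Qₙ` and
`Pₙ₊₁ ≺ Qₙ₊₁` (and `Pₙ ≺ Qₙ₊₁`). -/
theorem stmt18 (n : ℕ) :
    SeriesInterlaces (Pbin n) (Pbin (n + 1)) ∧
    SeriesInterlaces (Pbin (n + 1)) (Qbin n) ∧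
    SeriesInterlaces (Qbin n) (Qbin (n + 1)) ∧
    SeriesInterlaces (Pbin n) (Qbin n) ∧
    SeriesInterlaces (Pbin (n + 1)) (Qbin (n + 1)) ∧
    SeriesInterlaces (Pbin n) (Qbin (n + 1)) := by
  have hA := isAESW_one_add_X_pow n
  simp only [Pbin_eq_veronese, Qbin_eq_veronese, pow_succ']
  exact ⟨hA.seriesInterlaces_veronese_one_one_add_X_mul,
    hA.seriesInterlaces_one_add_X_mul_veronese_one_zero,
    hA.seriesInterlaces_veronese_zero_one_add_X_mul,
    hA.seriesInterlaces_veronese_one_zero,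
    hA.one_add_X_mul.seriesInterlaces_veronese_one_zero,
    hA.seriesInterlaces_veronese_one_zero_one_add_X_mul⟩
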